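/- arXiv:2604.24573 — 7 statements merged into one kernel-verified Lean document; each statement's English description precedes it below -/
import Mathlib

section
/- For a permutation w in S_n and any (k+1)-element increasing subset X = [x_1,...,x_{k+1}] of [n], the intersection of the packet P(X) with the set of k-inversions of w is one of: the empty set, a single element {X_i} for some i, a pair of consecutive elements {X_i, X_{i+1}} for some i, or the entire packet P(X). -/
/-!
Put `g = w⁻¹ ∘ X`; then `X_i` is a `k`-inversion exactly when `g` is strictly decreasing after
deleting position `i`. If this holds for two positions `i < j` with `j ≥ i + 2`, then `g` itself is
strictly decreasing: a pair avoiding `i` or `j` is handled by one of the hypotheses, and the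
remaining pair `(i, j)` by passing through `i + 1`. Then every `X_l` is a `k`-inversion. Otherwise
any two good positions are adjacent, so there are none, one, or two consecutive ones.
-/

/-- `X` (a strictly increasing `k`-tuple in `[n]`) is a `k`-inversion of `w`:
`w⁻¹` is strictly decreasing on its entries. -/
def IsKInv (n k : ℕ) (w : Equiv.Perm (Fin n)) (X : Fin k → Fin n) : Prop :=
  StrictMono X ∧ ∀ i j : Fin k, i < j → w⁻¹ (X j) < w⁻¹ (X i)

section StrictAnti

variable {α : Type*} [Preorder α] {k : ℕ} {g : Fin (k + 1) → α}

theorem StrictAnti.lt_of_comp_succAbove {p a b : Fin (k + 1)}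
    (hp : StrictAnti (g ∘ p.succAbove)) (ha : a ≠ p) (hb : b ≠ p) (hab : a < b) : g b < g a := by
  obtain ⟨a', rfl⟩ := Fin.exists_succAbove_eq ha
  obtain ⟨b', rfl⟩ := Fin.exists_succAbove_eq hb
  exact hp ((Fin.strictMono_succAbove p).lt_iff_lt.mp hab)

theorem strictAnti_of_comp_succAbove {i j : Fin (k + 1)} (hij : (i : ℕ) + 1 < j)
    (hi : StrictAnti (g ∘ i.succAbove)) (hj : StrictAnti (g ∘ j.succAbove)) : StrictAnti g := by
  intro a b hab
  by_cases hai : a ≠ i ∧ b ≠ i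
  · exact hi.lt_of_comp_succAbove hai.1 hai.2 hab
  by_cases haj : a ≠ j ∧ b ≠ j
  · exact hj.lt_of_comp_succAbove haj.1 haj.2 hab
  obtain ⟨rfl, rfl⟩ : a = i ∧ b = j := by
    simp only [not_and_or, not_not] at hai haj
    rw [Fin.lt_def] at hab
    rcases hai with rfl | rfl <;> rcases haj with rfl | rfl <;> simp [Fin.ext_iff] <;> omega
  let m : Fin (k + 1) := ⟨a + 1, by omega⟩
  have ham : a < m := Fin.lt_def.2 (Nat.lt_succ_self _)
  have hmb : m < b := Fin.lt_def.2 hij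
  calc g b < g m := hi.lt_of_comp_succAbove ham.ne' hab.ne' hmb
    _ < g a := hj.lt_of_comp_succAbove hab.ne hmb.ne ham

end StrictAnti

theorem Fin.eq_empty_or_singleton_or_pair_of_adjacent {k : ℕ} {S : Set (Fin (k + 1))}
    (hS : ∀ i ∈ S, ∀ j ∈ S, i < j → (j : ℕ) = i + 1) :
    S = ∅ ∨ (∃ i, S = {i}) ∨ ∃ i : Fin k, S = {i.castSucc, i.succ} := by
  rcases S.eq_empty_or_nonempty with hempty | hne
  · exact Or.inl hempty
  set i := wellFounded_lt.min S hne
  have hi : i ∈ S := wellFounded_lt.min_mem S hne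
  have hle : ∀ l ∈ S, i ≤ l := fun l hl => wellFounded_lt.min_le hl
  by_cases hsingle : S = {i}
  · exact Or.inr (Or.inl ⟨i, hsingle⟩)
  obtain ⟨j, hj, hji⟩ : ∃ j ∈ S, j ≠ i := by
    by_contra! h
    exact hsingle (Set.eq_singleton_iff_unique_mem.2 ⟨hi, h⟩)
  have hsucc : ∀ l ∈ S, i < l → (l : ℕ) = i + 1 := fun l hl => hS i hi l hl
  have hij := hsucc j hj ((hle j hj).lt_of_ne' hji)
  refine Or.inr (Or.inr ⟨⟨i, by omega⟩, ?_⟩)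
  ext l
  constructor
  · intro hl
    rcases (hle l hl).eq_or_lt with h | h
    · exact Or.inl (by simp [h])
    · exact Or.inr (by simp [Fin.ext_iff, hsucc l hl h])
  · rintro (rfl | rfl)
    · exact hi
    · convert hj
      simp [Fin.ext_iff, hij]

section Packet

variable {n k : ℕ} {w : Equiv.Perm (Fin n)} {X : Fin (k + 1) → Fin n}

theorem isKInv_comp_succAbove_iff (hX : StrictMono X) (i : Fin (k + 1)) :
    IsKInv n k w (X ∘ i.succAbove) ↔ StrictAnti ((⇑w⁻¹ ∘ X) ∘ i.succAbove) :=
  ⟨fun h => h.2, fun h => ⟨hX.comp (Fin.strictMono_succAbove i), h⟩⟩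

theorem isKInv_comp_succAbove_of_far_apart (hX : StrictMono X) {i j : Fin (k + 1)}
    (hij : (i : ℕ) + 1 < j) (hi : IsKInv n k w (X ∘ i.succAbove))
    (hj : IsKInv n k w (X ∘ j.succAbove)) (l : Fin (k + 1)) :
    IsKInv n k w (X ∘ l.succAbove) := by
  rw [isKInv_comp_succAbove_iff hX] at hi hj ⊢
  exact (strictAnti_of_comp_succAbove hij hi hj).comp_strictMono (Fin.strictMono_succAbove l)

theorem setOf_packet_isKInv_eq_image :
    {Y | (∃ i : Fin (k + 1), Y = X ∘ Fin.succAbove i) ∧ IsKInv n k w Y} =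
      (fun i => X ∘ Fin.succAbove i) '' {i | IsKInv n k w (X ∘ Fin.succAbove i)} := by
  ext Y
  constructor
  · rintro ⟨⟨i, rfl⟩, h⟩
    exact ⟨i, h, rfl⟩
  · rintro ⟨i, h, rfl⟩
    exact ⟨⟨i, rfl⟩, h⟩

end Packet

/-- for a `(k+1)`-subset `X` of `[n]`, the intersection of the packet
`P(X) = {X ∘ succAbove i}` with `Inv_k(w)` is empty, a singleton, a consecutive pair,
or the whole packet. -/
theorem packet_intersection_cases (n k : ℕ) (w : Equiv.Perm (Fin n))
    (X : Fin (k + 1) → Fin n) (hX : StrictMono X) :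
    ({Y | (∃ i : Fin (k + 1), Y = X ∘ Fin.succAbove i) ∧ IsKInv n k w Y} = (∅ : Set (Fin k → Fin n))) ∨
    (∃ i : Fin (k + 1),
      {Y | (∃ i : Fin (k + 1), Y = X ∘ Fin.succAbove i) ∧ IsKInv n k w Y}
        = {X ∘ Fin.succAbove i}) ∨
    (∃ i : Fin k,
      {Y | (∃ i : Fin (k + 1), Y = X ∘ Fin.succAbove i) ∧ IsKInv n k w Y}
        = {X ∘ Fin.succAbove i.castSucc, X ∘ Fin.succAbove i.succ}) ∨
    ({Y | (∃ i : Fin (k + 1), Y = X ∘ Fin.succAbove i) ∧ IsKInv n k w Y}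
        = {Y | ∃ i : Fin (k + 1), Y = X ∘ Fin.succAbove i}) := by
  rw [setOf_packet_isKInv_eq_image]
  set S := {i : Fin (k + 1) | IsKInv n k w (X ∘ Fin.succAbove i)}
  by_cases hall : S = Set.univ
  · refine Or.inr (Or.inr (Or.inr ?_))
    rw [hall, Set.image_univ]
    ext Y
    simp [eq_comm]
  have hS : ∀ i ∈ S, ∀ j ∈ S, i < j → (j : ℕ) = i + 1 := by
    intro i hi j hj hij
    by_contra hfar
    exact hall (Set.eq_univ_of_forall
      (isKInv_comp_succAbove_of_far_apart hX (by rw [Fin.lt_def] at hij; omega) hi hj))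
  rcases Fin.eq_empty_or_singleton_or_pair_of_adjacent hS with h | ⟨i, h⟩ | ⟨i, h⟩ <;> rw [h]
  · exact Or.inl (Set.image_empty _)
  · exact Or.inr (Or.inl ⟨i, Set.image_singleton⟩)
  · exact Or.inr (Or.inr (Or.inl ⟨i, Set.image_pair _ _ _⟩))
end

section
/- For w in S_n, the relation on k-inversions of w generated by the quasi-inversion relations is antisymmetric; that is, the permanent poset P_w(n,k) is a partial order. -/
/-- `X` is a `k`-quasi-inversion of `w`. -/
def IsKQuasiInv (n k : ℕ) (w : Equiv.Perm (Fin n)) (X : Fin k → Fin n) : Prop :=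
  StrictMono X ∧
    ∃! p : Fin k × Fin k, p.1 < p.2 ∧ ¬ w⁻¹ (X p.2) < w⁻¹ (X p.1)

/-- The quasi-inversion relations generating the permanent poset `P_w(n,k)`:
for a `(k+1)`-quasi-inversion `X` with `P(X) ∩ Inv_k(w) = {X_i, X_{i+1}}`
(here `i` is 1-based, encoded by `i : Fin k` with value `i+1`), relate
`X_i < X_{i+1}` when `k - i` is odd and `X_{i+1} < X_i` when `k - i` is even. -/
def QuasiRel (n k : ℕ) (w : Equiv.Perm (Fin n)) (A B : Fin k → Fin n) : Prop :=
  ∃ (X : Fin (k + 1) → Fin n) (i : Fin k),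
    IsKQuasiInv n (k + 1) w X ∧
    (∀ j : Fin (k + 1), IsKInv n k w (X ∘ Fin.succAbove j) ↔ (j = i.castSucc ∨ j = i.succ)) ∧
    ((Odd (k - (i.1 + 1)) ∧ A = X ∘ Fin.succAbove i.castSucc ∧ B = X ∘ Fin.succAbove i.succ) ∨
     (Even (k - (i.1 + 1)) ∧ A = X ∘ Fin.succAbove i.succ ∧ B = X ∘ Fin.succAbove i.castSucc))

/-
The alternating sum `∑ⱼ (-1)^(k-j) yⱼ` of the entries of a `k`-subset strictly increases along
each quasi-inversion relation: both sides are `X` with one of the adjacent entries `xᵢ < xᵢ₊₁`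
removed, so they differ only in position `i`, and the parity of `k - i` fixes the orientation
exactly so that the signed `i`-th term grows. Hence the relation has no cycles.
-/

namespace Relation.ReflTransGen

variable {α β : Type*} [Preorder β] {r : α → α → Prop} {f : α → β} {a b : α}

theorem map_le (hf : ∀ a b, r a b → f a ≤ f b) (h : ReflTransGen r a b) : f a ≤ f b := by
  simpa only [reflTransGen_eq_self] using h.lift f hf

theorem antisymm_of_map_lt (hf : ∀ a b, r a b → f a < f b) (hab : ReflTransGen r a b)
    (hba : ReflTransGen r b a) : a = b := by
  rcases reflTransGen_iff_eq_or_transGen.mp hab with rfl | hab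
  · rfl
  · have hlt : f a < f b := by simpa only [transGen_eq_self] using hab.lift f hf
    exact absurd (hba.map_le fun x y h ↦ (hf x y h).le) hlt.not_ge

end Relation.ReflTransGen

theorem Fin.succAbove_castSucc_eq_succAbove_succ {k : ℕ} {i j : Fin k} (h : j ≠ i) :
    i.castSucc.succAbove j = i.succ.succAbove j := by
  rcases h.lt_or_gt with hji | hij
  · rw [succAbove_castSucc_of_lt _ _ hji, succAbove_succ_of_le _ _ hji.le]
  · rw [succAbove_castSucc_of_le _ _ hij.le, succAbove_succ_of_lt _ _ hij]

section SignedSum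

variable {n k : ℕ}

def signedSum (Y : Fin k → Fin n) : ℤ :=
  ∑ j : Fin k, (-1 : ℤ) ^ (k - (j.1 + 1)) * (Y j : ℤ)

theorem signedSum_sub_signedSum_of_eq_of_ne {A B : Fin k → Fin n} (i : Fin k)
    (h : ∀ j, j ≠ i → A j = B j) :
    signedSum B - signedSum A = (-1 : ℤ) ^ (k - (i.1 + 1)) * ((B i : ℤ) - A i) := by
  rw [signedSum, signedSum, ← Finset.sum_sub_distrib, Finset.sum_eq_single i]
  · ring
  · intro j _ hj
    rw [h j hj, sub_self]
  · simp

theorem signedSum_lt_of_quasiRel {w : Equiv.Perm (Fin n)} {A B : Fin k → Fin n}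
    (h : QuasiRel n k w A B) : signedSum A < signedSum B := by
  obtain ⟨X, i, hX, -, hAB⟩ := h
  have hXi : (X i.castSucc : ℤ) < X i.succ := by exact_mod_cast hX.1 i.castSucc_lt_succ
  have hagree : ∀ j, j ≠ i → (X ∘ i.castSucc.succAbove) j = (X ∘ i.succ.succAbove) j :=
    fun j hj ↦ congrArg X (Fin.succAbove_castSucc_eq_succAbove_succ hj)
  rcases hAB with ⟨hodd, rfl, rfl⟩ | ⟨heven, rfl, rfl⟩
  · have hdiff := signedSum_sub_signedSum_of_eq_of_ne i hagree
    simp only [hodd.neg_one_pow, Function.comp_apply, Fin.succAbove_castSucc_self,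
      Fin.succAbove_succ_self] at hdiff
    linarith
  · have hdiff := signedSum_sub_signedSum_of_eq_of_ne i fun j hj ↦ (hagree j hj).symm
    simp only [heven.neg_one_pow, Function.comp_apply, Fin.succAbove_castSucc_self,
      Fin.succAbove_succ_self] at hdiff
    linarith

end SignedSum

theorem permanentPoset_antisymm_general (n k : ℕ) (w : Equiv.Perm (Fin n))
    (A B : Fin k → Fin n)
    (hAB : Relation.ReflTransGen (QuasiRel n k w) A B)
    (hBA : Relation.ReflTransGen (QuasiRel n k w) B A) :
    A = B :=
  hAB.antisymm_of_map_lt (fun _ _ h ↦ signedSum_lt_of_quasiRel h) hBA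

/-- the relation on `Inv_k(w)` generated by the quasi-inversion relations is
antisymmetric, i.e. the permanent poset `P_w(n,k)` is a partial order. -/
theorem permanentPoset_antisymm (n k : ℕ) (w : Equiv.Perm (Fin n))
    (A B : Fin k → Fin n) (hA : IsKInv n k w A) (hB : IsKInv n k w B)
    (hAB : Relation.ReflTransGen (QuasiRel n k w) A B)
    (hBA : Relation.ReflTransGen (QuasiRel n k w) B A) :
    A = B :=
  permanentPoset_antisymm_general n k w A B hAB hBA
end

section
/- For an affine permutation w in the affine symmetric group on n letters, if ρ is an admissible order (reflection order) of Inv_2(w) and [x,y], [x,y+n] are both 2-inversions of w, then [x,y] appears before [x,y+n] in ρ. -/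
/-- The affine simple transposition `s_i` (index mod `n`) as a function `ℤ → ℤ`:
it swaps `x` and `x+1` for every `x ≡ i (mod n)`. -/
def affS (n : ℕ) (i : ZMod n) : ℤ → ℤ := fun x =>
  if (x : ZMod n) = i then x + 1 else if (x : ZMod n) = i + 1 then x - 1 else x

/-- The function `s_{i_1} ∘ s_{i_2} ∘ ⋯ ∘ s_{i_ℓ}` associated to the word `L = i_1 ⋯ i_ℓ`. -/
def wordFun (n : ℕ) (L : List (ZMod n)) : ℤ → ℤ :=
  (L.map (affS n)).foldr (· ∘ ·) id

/-- `L` is a reduced word for `f`: its product is `f` and it has minimal length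
among all words with product `f`. -/
def IsReducedWord (n : ℕ) (f : ℤ → ℤ) (L : List (ZMod n)) : Prop :=
  wordFun n L = f ∧ ∀ M : List (ZMod n), wordFun n M = f → L.length ≤ M.length

/-- `f` is an affine permutation in the affine symmetric group on `n` letters. -/
def IsAffinePerm (n : ℕ) (f : ℤ → ℤ) : Prop :=
  Function.Bijective f ∧ (∀ x : ℤ, f (x + n) = f x + n) ∧
    (∑ i ∈ Finset.Icc (1 : ℤ) (n : ℤ), f i) = n * (n + 1) / 2

/-- The `j`-th entry (0-based) of the reflection order of the word `L`:
`ρ_j = (w⁽ʲ⁾(i_j), w⁽ʲ⁾(i_j + 1))` where `w⁽ʲ⁾ = s_{i_1} ⋯ s_{i_{j-1}}`. -/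
def reflEntry (n : ℕ) (L : List (ZMod n)) (j : ℕ) : ℤ × ℤ :=
  (wordFun n (L.take j) ((L.getD j 0).val : ℤ),
   wordFun n (L.take j) (((L.getD j 0).val : ℤ) + 1))

/-! Along a reduced word `i_1 ⋯ i_ℓ` every prefix product `w⁽ᵏ⁾` has an ascent at `i_k`: a descent
there would, by the strong exchange condition, let us delete two letters of the word. Hence passing
from `w⁽ᵏ⁾` to `w⁽ᵏ⁺¹⁾ = w⁽ᵏ⁾ s_{i_k}` keeps every inversion `[x, y]` with `x < y`, so the inversion
sets of the prefixes increase. Now `w⁽ʲ'⁾` sends some `i', i' + 1 - n` to `x, y` (up to a common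
shift), so `[x, y]` is already an inversion of `w⁽ʲ'⁾`, while `w⁽ʲ⁾` sends some `i, i + 1` to
`x, y`, so `[x, y]` is not an inversion of `w⁽ʲ⁾`. Therefore `j < j'`. -/

open Function

section
variable {n : ℕ}

lemma exists_eq_add_mul_of_intCast_eq {a b : ℤ} (h : (a : ZMod n) = b) :
    ∃ m : ℤ, a = b + m * n := by
  obtain ⟨m, hm⟩ := Int.modEq_iff_add_fac.mp ((ZMod.intCast_eq_intCast_iff b a n).mp h.symm)
  exact ⟨m, by rw [hm, mul_comm]⟩

lemma affS_of_eq {c : ZMod n} {z : ℤ} (h : (z : ZMod n) = c) : affS n c z = z + 1 := by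
  simp [affS, h]

lemma affS_of_eq_add_one [Nontrivial (ZMod n)] {c : ZMod n} {z : ℤ}
    (h : (z : ZMod n) = c + 1) : affS n c z = z - 1 := by
  simp [affS, h]

lemma affS_of_ne {c : ZMod n} {z : ℤ} (h₁ : (z : ZMod n) ≠ c) (h₂ : (z : ZMod n) ≠ c + 1) :
    affS n c z = z := by
  simp [affS, h₁, h₂]

lemma affS_involutive [Nontrivial (ZMod n)] (c : ZMod n) : Involutive (affS n c) := by
  intro z
  by_cases h₁ : (z : ZMod n) = c
  · rw [affS_of_eq h₁, affS_of_eq_add_one (by push_cast [h₁]; rfl), add_sub_cancel_right]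
  by_cases h₂ : (z : ZMod n) = c + 1
  · rw [affS_of_eq_add_one h₂, affS_of_eq (by push_cast [h₂]; ring), sub_add_cancel]
  rw [affS_of_ne h₁ h₂, affS_of_ne h₁ h₂]

lemma affS_add_mul (c : ZMod n) (z m : ℤ) : affS n c (z + m * n) = affS n c z + m * n := by
  simp only [affS, Int.cast_add, Int.cast_mul, Int.cast_natCast, ZMod.natCast_self, mul_zero,
    add_zero]
  split_ifs <;> ring

lemma affS_lt_affS_iff [Nontrivial (ZMod n)] {c : ZMod n} {a b : ℤ} (hab : a < b) :
    affS n c b < affS n c a ↔ b = a + 1 ∧ (a : ZMod n) = c := by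
  constructor
  · intro h
    have hb : b = a + 1 := by unfold affS at h; split_ifs at h <;> omega
    subst hb
    refine ⟨rfl, ?_⟩
    by_contra ha
    have : ((a + 1 : ℤ) : ZMod n) ≠ c + 1 := by push_cast; simpa using ha
    unfold affS at h
    split_ifs at h <;> omega
  · rintro ⟨rfl, ha⟩
    rw [affS_of_eq ha, affS_of_eq_add_one (by push_cast [ha]; rfl)]
    omega

lemma wordFun_cons (c : ZMod n) (M : List (ZMod n)) : wordFun n (c :: M) = affS n c ∘ wordFun n M :=
  rfl

lemma wordFun_append (A B : List (ZMod n)) : wordFun n (A ++ B) = wordFun n A ∘ wordFun n B := by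
  induction A with
  | nil => rfl
  | cons c A ih => rw [List.cons_append, wordFun_cons, wordFun_cons, ih, comp_assoc]

lemma wordFun_concat (M : List (ZMod n)) (c : ZMod n) :
    wordFun n (M ++ [c]) = wordFun n M ∘ affS n c := by
  rw [wordFun_append]; rfl

lemma wordFun_add_mul (M : List (ZMod n)) (z m : ℤ) :
    wordFun n M (z + m * n) = wordFun n M z + m * n := by
  induction M with
  | nil => rfl
  | cons c M ih => simp only [wordFun_cons, comp_apply, ih, affS_add_mul]

lemma wordFun_injective [Nontrivial (ZMod n)] (M : List (ZMod n)) : Injective (wordFun n M) := by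
  induction M with
  | nil => exact injective_id
  | cons c M ih => exact (affS_involutive c).injective.comp ih

lemma intCast_eq_of_wordFun [Nontrivial (ZMod n)] (M : List (ZMod n)) {a b : ℤ}
    (h : (wordFun n M a : ZMod n) = wordFun n M b) : (a : ZMod n) = b := by
  obtain ⟨m, hm⟩ := exists_eq_add_mul_of_intCast_eq h
  rw [← wordFun_add_mul] at hm
  simp [wordFun_injective M hm]

lemma affS_comp_wordFun [Nontrivial (ZMod n)] (M : List (ZMod n)) {c d : ZMod n} {i : ℤ}
    (hi : (i : ZMod n) = d) (hc : (wordFun n M i : ZMod n) = c)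
    (hsucc : wordFun n M (i + 1) = wordFun n M i + 1) :
    affS n c ∘ wordFun n M = wordFun n M ∘ affS n d := by
  funext z
  simp only [comp_apply]
  by_cases h₁ : (z : ZMod n) = d
  · obtain ⟨m, rfl⟩ := exists_eq_add_mul_of_intCast_eq (h₁.trans hi.symm)
    rw [wordFun_add_mul, affS_add_mul, affS_add_mul, affS_of_eq hc, affS_of_eq hi,
      wordFun_add_mul, hsucc]
  by_cases h₂ : (z : ZMod n) = d + 1
  · have hz : (z : ZMod n) = ((i + 1 : ℤ) : ZMod n) := by push_cast [h₂, hi]; rfl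
    obtain ⟨m, rfl⟩ := exists_eq_add_mul_of_intCast_eq hz
    have hc' : ((wordFun n M (i + 1) : ℤ) : ZMod n) = c + 1 := by push_cast [hsucc, hc]; rfl
    rw [wordFun_add_mul, affS_add_mul, affS_add_mul, affS_of_eq_add_one hc',
      affS_of_eq_add_one (by push_cast [hi]; rfl), add_sub_cancel_right, hsucc,
      add_sub_cancel_right, wordFun_add_mul]
  rw [affS_of_ne h₁ h₂]
  refine affS_of_ne (fun h => h₁ ?_) (fun h => h₂ ?_)
  · rw [← hi]; exact intCast_eq_of_wordFun M (h.trans hc.symm)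
  · rw [← hi]
    have := intCast_eq_of_wordFun M (a := z) (b := i + 1) (by rw [h, hsucc, ← hc]; push_cast; rfl)
    rw [this]; push_cast; rfl

/-- Strong exchange condition: if `wordFun n M` has a descent at `i ≡ c`, then `M ++ [c]`
has the same product as `M` with one letter deleted. -/
lemma exists_wordFun_eq_concat_of_descent [Nontrivial (ZMod n)] (M : List (ZMod n)) {c : ZMod n}
    {i : ℤ} (hi : (i : ZMod n) = c) (h : wordFun n M (i + 1) < wordFun n M i) :
    ∃ M' : List (ZMod n), M'.length + 1 = M.length ∧ wordFun n M' = wordFun n (M ++ [c]) := by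
  induction M with
  | nil => exact absurd h (by simp [wordFun])
  | cons d M ih =>
    rw [wordFun_cons, comp_apply, comp_apply] at h
    rcases lt_trichotomy (wordFun n M (i + 1)) (wordFun n M i) with hlt | heq | hgt
    · obtain ⟨M', hlen, hM'⟩ := ih hlt
      exact ⟨d :: M', by simp [hlen], by rw [wordFun_cons, hM', List.cons_append, wordFun_cons]⟩
    · exact absurd (wordFun_injective M heq) (by omega)
    · obtain ⟨hsucc, hd⟩ := (affS_lt_affS_iff hgt).mp h
      refine ⟨M, rfl, ?_⟩
      rw [List.cons_append, wordFun_cons, wordFun_concat, ← comp_assoc,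
        affS_comp_wordFun M hi hd hsucc, comp_assoc, (affS_involutive c).comp_self, comp_id]

lemma IsReducedWord.wordFun_take_lt_succ [Nontrivial (ZMod n)] {f : ℤ → ℤ} {L : List (ZMod n)}
    (hL : IsReducedWord n f L) {k : ℕ} (hk : k < L.length) {i : ℤ} (hi : (i : ZMod n) = L[k]) :
    wordFun n (L.take k) i < wordFun n (L.take k) (i + 1) := by
  by_contra! hle
  have hlt : wordFun n (L.take k) (i + 1) < wordFun n (L.take k) i :=
    hle.lt_of_ne fun heq => by simpa using wordFun_injective _ heq
  obtain ⟨M', hlen, hM'⟩ := exists_wordFun_eq_concat_of_descent _ hi hlt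
  have hprod : wordFun n (M' ++ L.drop (k + 1)) = f := by
    rw [← hL.1, wordFun_append, hM', ← wordFun_append, List.append_assoc, List.singleton_append,
      ← List.drop_eq_getElem_cons hk, List.take_append_drop]
  have := hL.2 _ hprod
  simp only [List.length_append, List.length_drop, List.length_take] at this hlen
  omega

def IsInversion (g : ℤ → ℤ) (x y : ℤ) : Prop :=
  ∃ a b : ℤ, g a = x ∧ g b = y ∧ b < a

lemma IsInversion.concat [Nontrivial (ZMod n)] {M : List (ZMod n)} {c : ZMod n} {x y : ℤ}
    (hxy : x < y) (hasc : ∀ i : ℤ, (i : ZMod n) = c → wordFun n M i < wordFun n M (i + 1))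
    (h : IsInversion (wordFun n M) x y) : IsInversion (wordFun n (M ++ [c])) x y := by
  obtain ⟨a, b, ha, hb, hba⟩ := h
  refine ⟨affS n c a, affS n c b, ?_, ?_, ?_⟩
  · rw [wordFun_concat, comp_apply, affS_involutive, ha]
  · rw [wordFun_concat, comp_apply, affS_involutive, hb]
  rcases lt_trichotomy (affS n c b) (affS n c a) with hlt | heq | hgt
  · exact hlt
  · exact absurd ((affS_involutive c).injective heq) hba.ne
  · obtain ⟨rfl, hbc⟩ := (affS_lt_affS_iff hba).mp hgt
    have := hasc b hbc
    omega

lemma IsReducedWord.isInversion_take_mono [Nontrivial (ZMod n)] {f : ℤ → ℤ} {L : List (ZMod n)}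
    (hL : IsReducedWord n f L) {x y : ℤ} (hxy : x < y) {k k' : ℕ} (hkk' : k ≤ k')
    (h : IsInversion (wordFun n (L.take k)) x y) : IsInversion (wordFun n (L.take k')) x y := by
  induction hkk' with
  | refl => exact h
  | @step m _ ih =>
    rcases lt_or_ge m L.length with hm | hm
    · rw [List.take_succ_eq_append_getElem hm]
      exact ih.concat hxy fun i hi => hL.wordFun_take_lt_succ hm hi
    · rwa [List.take_of_length_le (by omega), ← List.take_of_length_le hm]

lemma isInversion_of_reflEntry_eq_shift (hn : 1 < n) (L : List (ZMod n)) (j : ℕ) {x y m : ℤ}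
    (h : reflEntry n L j = (x + m * n, y + n + m * n)) :
    IsInversion (wordFun n (L.take j)) x y := by
  rw [reflEntry, Prod.mk.injEq] at h
  set i : ℤ := ((L.getD j 0).val : ℤ)
  have hn' : (1 : ℤ) < n := mod_cast hn
  refine ⟨i + (-m) * n, i + 1 + (-m - 1) * n, ?_, ?_, by linarith⟩
  · rw [wordFun_add_mul, h.1]; ring
  · rw [wordFun_add_mul, h.2]; ring

lemma not_isInversion_of_reflEntry_eq [Nontrivial (ZMod n)] (L : List (ZMod n)) (j : ℕ)
    {x y m : ℤ} (h : reflEntry n L j = (x + m * n, y + m * n)) :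
    ¬ IsInversion (wordFun n (L.take j)) x y := by
  rw [reflEntry, Prod.mk.injEq] at h
  rintro ⟨a, b, ha, hb, hba⟩
  set i : ℤ := ((L.getD j 0).val : ℤ)
  have ha' : a = i + (-m) * n :=
    wordFun_injective _ (by rw [ha, wordFun_add_mul, h.1]; ring)
  have hb' : b = i + 1 + (-m) * n :=
    wordFun_injective _ (by rw [hb, wordFun_add_mul, h.2]; ring)
  omega

end

theorem inversion_before_shifted_general (n : ℕ) (hn : 2 ≤ n) (f : ℤ → ℤ)
    (L : List (ZMod n)) (hL : IsReducedWord n f L)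
    (x y : ℤ) (hxy : x < y)
    (j j' : ℕ)
    (hmatch1 : ∃ m : ℤ, reflEntry n L j = (x + m * n, y + m * n))
    (hmatch2 : ∃ m : ℤ, reflEntry n L j' = (x + m * n, y + n + m * n)) :
    j < j' := by
  have : Fact (1 < n) := ⟨hn⟩
  obtain ⟨m, hm⟩ := hmatch1
  obtain ⟨m', hm'⟩ := hmatch2
  by_contra! hle
  exact not_isInversion_of_reflEntry_eq L j hm
    (hL.isInversion_take_mono hxy hle (isInversion_of_reflEntry_eq_shift hn L j' hm'))

/-- for an affine permutation `w` and a reflection order `ρ` of `Inv_2(w)`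
(coming from a reduced word `L`), if `[x,y]` and `[x,y+n]` are both 2-inversions of `w`,
then `[x,y]` appears before `[x,y+n]` in `ρ`. -/
theorem inversion_before_shifted (n : ℕ) (hn : 2 ≤ n) (f : ℤ → ℤ)
    (hf : IsAffinePerm n f) (L : List (ZMod n)) (hL : IsReducedWord n f L)
    (x y : ℤ) (hxy : x < y) (hmod : (x : ZMod n) ≠ (y : ZMod n))
    (hinv1 : ∀ a b : ℤ, f a = x → f b = y → b < a)
    (hinv2 : ∀ a b : ℤ, f a = x → f b = y + n → b < a)
    (j j' : ℕ) (hj : j < L.length) (hj' : j' < L.length)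
    (hmatch1 : ∃ m : ℤ, reflEntry n L j = (x + m * n, y + m * n))
    (hmatch2 : ∃ m : ℤ, reflEntry n L j' = (x + m * n, y + n + m * n)) :
    j < j' :=
  inversion_before_shifted_general n hn f L hL x y hxy j j' hmatch1 hmatch2
end

section
/- For w in S_n, the 1-admissible orders for w (total orders of [n] such that for every 2-inversion [i,j] of w the restriction to {i,j} may be in either order, and for every 2-quasi-inversion [i,j] of w the element i precedes j) are in bijection with the permutations v in the weak order interval [id, w], via sending v to the total order v(1), v(2), ..., v(n) read as a sequence. -/
/-! Since `σ⁻¹` is injective, every pair `i < j` is either an inversion or an ascent of `σ`.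
Hence `Inv_2(v) ⊆ Inv_2(w)` is equivalent to "every ascent of `w` is an ascent of `v`", which
says that the listing of `v` is 1-admissible for `w`; the bijection is then the identity. -/

/-- `v ≤ w` in the (right) weak order: `Inv_2(v) ⊆ Inv_2(w)`. -/
def WeakLE (n : ℕ) (v w : Equiv.Perm (Fin n)) : Prop :=
  ∀ i j : Fin n, i < j → v⁻¹ j < v⁻¹ i → w⁻¹ j < w⁻¹ i

/-- A total order of `[n]`, recorded as the listing `σ(1), …, σ(n)` of a permutation `σ`,
is 1-admissible for `w` if `i` precedes `j` (i.e. `σ⁻¹ i < σ⁻¹ j`) whenever `[i,j]` is a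
2-quasi-inversion of `w` (`i < j` and `w⁻¹ i < w⁻¹ j`); for 2-inversions of `w` either
order is allowed. -/
def IsOneAdmissible (n : ℕ) (w σ : Equiv.Perm (Fin n)) : Prop :=
  ∀ i j : Fin n, i < j → w⁻¹ i < w⁻¹ j → σ⁻¹ i < σ⁻¹ j

section Inversions

variable {α β γ : Type*} [LinearOrder α] [LinearOrder β] [LinearOrder γ]

theorem inversions_subset_iff_ascents_subset {f : α → β} {g : α → γ}
    (hf : Function.Injective f) (hg : Function.Injective g) :
    (∀ i j, i < j → f j < f i → g j < g i) ↔ (∀ i j, i < j → g i < g j → f i < f j) := by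
  constructor
  · intro h i j hij hg_asc
    exact lt_of_le_of_ne (not_lt.mp fun hf_inv => (h i j hij hf_inv).asymm hg_asc)
      (hf.ne hij.ne)
  · intro h i j hij hf_inv
    exact lt_of_le_of_ne (not_lt.mp fun hg_asc => (h i j hij hg_asc).asymm hf_inv)
      (hg.ne hij.ne')

end Inversions

theorem weakLE_iff_isOneAdmissible {n : ℕ} (v w : Equiv.Perm (Fin n)) :
    WeakLE n v w ↔ IsOneAdmissible n w v :=
  inversions_subset_iff_ascents_subset v⁻¹.injective w⁻¹.injective

/-- the 1-admissible orders for `w` are in bijection with the permutations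
`v` in the weak order interval `[id, w]`, via sending `v` to the total order
`v(1), v(2), …, v(n)`. -/
theorem oneAdmissible_bijection (n : ℕ) (w : Equiv.Perm (Fin n)) :
    Set.BijOn (fun v : Equiv.Perm (Fin n) => v)
      {v | WeakLE n v w} {σ | IsOneAdmissible n w σ} := by
  have h_eq : {v | WeakLE n v w} = {σ | IsOneAdmissible n w σ} :=
    Set.ext fun v => weakLE_iff_isOneAdmissible v w
  rw [h_eq]
  exact Set.bijOn_id _
end

section
/- For w in S_n, a permutation v satisfies v ≤ w in the weak order (Inv_2(v) ⊆ Inv_2(w)) if and only if the total order on [n] given by the one-line notation of v is a linear extension of the partial order on [n] generated by the relations i < j whenever i < j in Z and w^{-1}(i) < w^{-1}(j). -/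
/-!
Taking contrapositives, `Inv_2(v) ⊆ Inv_2(w)` says that every non-inversion `i < j`,
`w⁻¹ i < w⁻¹ j` of `w` is a non-inversion of `v`, i.e. that `v⁻¹` is strictly monotone along
the generating relations. Since `<` is transitive, this is the same as being strictly monotone
along their transitive closure.
-/

open Function Relation

theorem forall_inversion_imp_iff_forall_noninversion_imp {α β γ : Type*} [LinearOrder α]
    [LinearOrder β] [LinearOrder γ] {f : α → β} {g : α → γ} (hf : Injective f)
    (hg : Injective g) :
    (∀ i j, i < j → f j < f i → g j < g i) ↔ ∀ i j, i < j → g i < g j → f i < f j :=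
  forall₃_congr fun _ _ hij => by
    rw [← not_imp_not, not_lt, not_lt, (hf.ne hij.ne).le_iff_lt, (hg.ne hij.ne).le_iff_lt]

theorem Relation.forall_transGen_imp_iff {α β : Type*} {r : α → α → Prop}
    {p : β → β → Prop} [IsTrans β p] (f : α → β) :
    (∀ a b, TransGen r a b → p (f a) (f b)) ↔ ∀ a b, r a b → p (f a) (f b) :=
  ⟨fun h a b hab => h a b (.single hab),
    fun h _ _ hab => transGen_eq_self (r := p) ▸ hab.lift f h⟩

/-- `v ≤ w` in the weak order (`Inv_2(v) ⊆ Inv_2(w)`) iff the one-line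
order of `v` is a linear extension of the partial order on `[n]` generated by the
relations `i < j` whenever `i < j` (in `ℤ`) and `w⁻¹(i) < w⁻¹(j)`. -/
theorem weakOrder_iff_linearExtension (n : ℕ) (v w : Equiv.Perm (Fin n)) :
    (∀ i j : Fin n, i < j → v⁻¹ j < v⁻¹ i → w⁻¹ j < w⁻¹ i) ↔
    (∀ i j : Fin n,
      Relation.TransGen (fun a b : Fin n => a < b ∧ w⁻¹ a < w⁻¹ b) i j →
        v⁻¹ i < v⁻¹ j) := by
  rw [forall_inversion_imp_iff_forall_noninversion_imp v⁻¹.injective w⁻¹.injective,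
    forall_transGen_imp_iff]
  simp only [and_imp]
end

section
/- For w in S_n and ρ a k-admissible order of Inv_k(w), the reversal set Rev(ρ) = {X ∈ Inv_{k+1}(w) : ρ restricted to P(X) is in antilex order (X_1, X_2, ..., X_{k+1})} is a lower order ideal of the permanent poset P_w(n,k+1). -/
/-- A total order of `Inv_k(w)`, recorded as a duplicate-free list enumerating it. -/
def IsOrderOf (n k : ℕ) (w : Equiv.Perm (Fin n)) (L : List (Fin k → Fin n)) : Prop :=
  L.Nodup ∧ ∀ A : Fin k → Fin n, A ∈ L ↔ IsKInv n k w A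

/-- The restriction of the order `L` to the packet `P(X)` is the lex order
`(X_{k+1}, …, X_1)`. -/
def LexAt (n k : ℕ) (L : List (Fin k → Fin n)) (X : Fin (k + 1) → Fin n) : Prop :=
  ∀ i j : Fin (k + 1), i < j →
    L.idxOf (X ∘ Fin.succAbove j) < L.idxOf (X ∘ Fin.succAbove i)

/-- The restriction of the order `L` to the packet `P(X)` is the antilex order
`(X_1, …, X_{k+1})`. -/
def AntilexAt (n k : ℕ) (L : List (Fin k → Fin n)) (X : Fin (k + 1) → Fin n) : Prop :=
  ∀ i j : Fin (k + 1), i < j →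
    L.idxOf (X ∘ Fin.succAbove i) < L.idxOf (X ∘ Fin.succAbove j)

/-- `L` is a `k`-admissible order for `w`: a linear extension of the permanent poset
`P_w(n,k)` whose restriction to each packet `P(X)`, `X ∈ Inv_{k+1}(w)`, is lex or antilex. -/
def IsAdmissible (n k : ℕ) (w : Equiv.Perm (Fin n)) (L : List (Fin k → Fin n)) : Prop :=
  IsOrderOf n k w L ∧
  (∀ A B : Fin k → Fin n, Relation.TransGen (QuasiRel n k w) A B →
    L.idxOf A < L.idxOf B) ∧
  (∀ X : Fin (k + 1) → Fin n, IsKInv n (k + 1) w X →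
    (LexAt n k L X ∨ AntilexAt n k L X))

/-- The reversal set of the admissible order `L`: the `(k+1)`-inversions whose packet
appears in antilex order in `L`. -/
def RevSet (n k : ℕ) (w : Equiv.Perm (Fin n)) (L : List (Fin k → Fin n)) :
    Set (Fin (k + 1) → Fin n) :=
  {X | IsKInv n (k + 1) w X ∧ AntilexAt n k L X}

/-! Let `A ⋖ C` come from a quasi-inversion `X` whose non-inverted pair sits at the adjacent
positions `i, i + 1`, so that `A` and `C` are the facets of `X` omitting one of them and share the
facet `A_i = C_i` omitting both. Suppose `C` is antilex but `A` is lex. Take `r = 0` if `i ≠ 0`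
and `r = k` otherwise, and delete from `X` the element sitting at position `r` of both `A` and `C`.
What remains is a quasi-inversion whose two inversion facets are `A_r` and `C_r`, so the relation
it generates in `P_w(n,k)` gives `A_r < C_r` if `r < i` and `C_r < A_r` if `r > i`. Comparing
through `A_i = C_i` inside the lex packet of `A` and the antilex packet of `C` gives the opposite.
For `k = 0` every packet is trivially antilex. -/

def IsQuasiInvAt {n m : ℕ} (w : Equiv.Perm (Fin n)) (X : Fin m → Fin n) (p : Fin m × Fin m) :
    Prop :=
  StrictMono X ∧ ∀ a b, a < b ∧ ¬ w⁻¹ (X b) < w⁻¹ (X a) ↔ (a, b) = p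

def QuasiPair {α : Type*} {k : ℕ} (X : Fin (k + 1) → α) (i : Fin k) (A B : Fin k → α) : Prop :=
  (Odd (k - (i.1 + 1)) ∧ A = X ∘ Fin.succAbove i.castSucc ∧ B = X ∘ Fin.succAbove i.succ) ∨
  (Even (k - (i.1 + 1)) ∧ A = X ∘ Fin.succAbove i.succ ∧ B = X ∘ Fin.succAbove i.castSucc)

section QuasiInversion

variable {n m l : ℕ} {w : Equiv.Perm (Fin n)}

theorem isKQuasiInv_iff_exists_isQuasiInvAt {X : Fin m → Fin n} :
    IsKQuasiInv n m w X ↔ ∃ p, IsQuasiInvAt w X p := by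
  constructor
  · rintro ⟨hX, p, hp, huniq⟩
    exact ⟨p, hX, fun a b => ⟨huniq (a, b), by rintro rfl; exact hp⟩⟩
  · rintro ⟨p, hX, hp⟩
    exact ⟨hX, p, (hp p.1 p.2).mpr rfl, fun q hq => (hp q.1 q.2).mp hq⟩

namespace IsQuasiInvAt

variable {X : Fin m → Fin n} {p : Fin m × Fin m}

theorem isKInv_comp_iff (hX : IsQuasiInvAt w X p) {e : Fin l → Fin m} (he : StrictMono e) :
    IsKInv n l w (X ∘ e) ↔ ¬ (p.1 ∈ Set.range e ∧ p.2 ∈ Set.range e) := by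
  constructor
  · rintro ⟨-, hinv⟩ ⟨⟨a, ha⟩, ⟨b, hb⟩⟩
    obtain ⟨hlt, hnot⟩ := (hX.2 p.1 p.2).mpr rfl
    rw [← ha, ← hb] at hlt hnot
    exact hnot (hinv a b (he.lt_iff_lt.mp hlt))
  · refine fun h => ⟨hX.1.comp he, fun a b hab => not_not.mp fun hnot => h ?_⟩
    rw [← (hX.2 (e a) (e b)).mp ⟨he hab, hnot⟩]
    exact ⟨⟨a, rfl⟩, ⟨b, rfl⟩⟩

theorem isKInv_comp_succAbove_iff {X : Fin (l + 1) → Fin n} {p : Fin (l + 1) × Fin (l + 1)}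
    (hX : IsQuasiInvAt w X p) (j : Fin (l + 1)) :
    IsKInv n l w (X ∘ j.succAbove) ↔ j = p.1 ∨ j = p.2 := by
  rw [hX.isKInv_comp_iff (Fin.strictMono_succAbove j), Fin.range_succAbove]
  simp only [Set.mem_compl_iff, Set.mem_singleton_iff, not_and_or, not_not]
  tauto

theorem isKInv_of_quasiPair {X : Fin (l + 1) → Fin n} {i : Fin l} {A B : Fin l → Fin n}
    (hX : IsQuasiInvAt w X (i.castSucc, i.succ)) (h : QuasiPair X i A B) : IsKInv n l w A := by
  rcases h with ⟨-, rfl, -⟩ | ⟨-, rfl, -⟩ <;> simp [hX.isKInv_comp_succAbove_iff]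

theorem comp (hX : IsQuasiInvAt w X p) {e : Fin l → Fin m} (he : StrictMono e)
    {q : Fin l × Fin l} (hq : (e q.1, e q.2) = p) : IsQuasiInvAt w (X ∘ e) q := by
  refine ⟨hX.1.comp he, fun a b => ?_⟩
  rw [← he.lt_iff_lt, Function.comp_apply, Function.comp_apply, hX.2, ← hq]
  simp only [he.injective.eq_iff, Prod.ext_iff]

theorem eq_of_isKInv_comp_succAbove_iff {X : Fin (l + 1) → Fin n}
    {p q : Fin (l + 1) × Fin (l + 1)} (hX : IsQuasiInvAt w X p) (hq : q.1 < q.2)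
    (hfac : ∀ j, IsKInv n l w (X ∘ j.succAbove) ↔ j = q.1 ∨ j = q.2) : p = q := by
  have hp := ((hX.2 p.1 p.2).mpr rfl).1
  have hpq : ∀ j, j = p.1 ∨ j = p.2 ↔ j = q.1 ∨ j = q.2 := fun j =>
    (hX.isKInv_comp_succAbove_iff j).symm.trans (hfac j)
  have h1 := (hpq p.1).mp (Or.inl rfl)
  have h2 := (hpq p.2).mp (Or.inr rfl)
  have h3 := (hpq q.1).mpr (Or.inl rfl)
  have h4 := (hpq q.2).mpr (Or.inr rfl)
  ext <;> grind

end IsQuasiInvAt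

theorem quasiRel_iff {k : ℕ} {A B : Fin k → Fin n} :
    QuasiRel n k w A B ↔
      ∃ X i, IsQuasiInvAt w X (Fin.castSucc i, i.succ) ∧ QuasiPair X i A B := by
  constructor
  · rintro ⟨X, i, hquasi, hfac, hpair⟩
    obtain ⟨p, hp⟩ := isKQuasiInv_iff_exists_isQuasiInvAt.mp hquasi
    obtain rfl := hp.eq_of_isKInv_comp_succAbove_iff (q := (_, _)) Fin.castSucc_lt_succ hfac
    exact ⟨X, i, hp, hpair⟩
  · rintro ⟨X, i, hX, hpair⟩
    exact ⟨X, i, isKQuasiInv_iff_exists_isQuasiInvAt.mpr ⟨_, hX⟩,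
      hX.isKInv_comp_succAbove_iff, hpair⟩

end QuasiInversion

theorem Fin.succAbove_castSucc_comp_succAbove {k : ℕ} (i : Fin (k + 1)) :
    i.castSucc.succAbove ∘ i.succAbove = i.succ.succAbove ∘ i.succAbove := by
  funext m
  simpa using (Fin.succAbove_succAbove_succAbove_predAbove i.castSucc i m).symm

namespace QuasiPair

variable {α : Type*} {k : ℕ} {X : Fin (k + 2) → α} {A B : Fin (k + 1) → α}

theorem comp_succAbove_self {i : Fin (k + 1)} (h : QuasiPair X i A B) :
    A ∘ i.succAbove = B ∘ i.succAbove := by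
  rcases h with ⟨-, rfl, rfl⟩ | ⟨-, rfl, rfl⟩ <;>
    simp only [Function.comp_assoc, Fin.succAbove_castSucc_comp_succAbove]

theorem comp_succAbove_zero {j : Fin k} (h : QuasiPair X j.succ A B) :
    QuasiPair (X ∘ Fin.succ) j (A ∘ Fin.succAbove 0) (B ∘ Fin.succAbove 0) := by
  have hpar : k + 1 - (j.succ.1 + 1) = k - (j.1 + 1) := by simp
  rcases h with ⟨h, rfl, rfl⟩ | ⟨h, rfl, rfl⟩
  · refine .inl ⟨hpar ▸ h, ?_, ?_⟩ <;> funext m <;> simp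
  · refine .inr ⟨hpar ▸ h, ?_, ?_⟩ <;> funext m <;> simp

theorem comp_succAbove_last {j : Fin k} (h : QuasiPair X j.castSucc A B) :
    QuasiPair (X ∘ Fin.castSucc) j (B ∘ Fin.succAbove (Fin.last k))
      (A ∘ Fin.succAbove (Fin.last k)) := by
  have hpar : k + 1 - (j.castSucc.1 + 1) = k - (j.1 + 1) + 1 := by simp; omega
  rcases h with ⟨h, rfl, rfl⟩ | ⟨h, rfl, rfl⟩
  · rw [hpar, Nat.odd_add_one, Nat.not_odd_iff_even] at h
    refine .inr ⟨h, ?_, ?_⟩ <;> funext m <;> simp [Fin.succ_castSucc, -Fin.castSucc_succ]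
  · rw [hpar, Nat.even_add_one, Nat.not_even_iff_odd] at h
    refine .inl ⟨h, ?_, ?_⟩ <;> funext m <;> simp [Fin.succ_castSucc, -Fin.castSucc_succ]

end QuasiPair

section LexAntilex

variable {n k : ℕ} {L : List (Fin k → Fin n)} {A C : Fin (k + 1) → Fin n} {i r : Fin (k + 1)}

theorem LexAt.idxOf_lt_of_antilexAt_of_lt (hA : LexAt n k L A) (hC : AntilexAt n k L C)
    (hAC : A ∘ i.succAbove = C ∘ i.succAbove) (hr : r < i) :
    L.idxOf (C ∘ r.succAbove) < L.idxOf (A ∘ r.succAbove) :=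
  calc L.idxOf (C ∘ r.succAbove) < L.idxOf (C ∘ i.succAbove) := hC r i hr
    _ = L.idxOf (A ∘ i.succAbove) := by rw [hAC]
    _ < L.idxOf (A ∘ r.succAbove) := hA r i hr

theorem LexAt.idxOf_lt_of_antilexAt_of_gt (hA : LexAt n k L A) (hC : AntilexAt n k L C)
    (hAC : A ∘ i.succAbove = C ∘ i.succAbove) (hr : i < r) :
    L.idxOf (A ∘ r.succAbove) < L.idxOf (C ∘ r.succAbove) :=
  calc L.idxOf (A ∘ r.succAbove) < L.idxOf (A ∘ i.succAbove) := hA i r hr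
    _ = L.idxOf (C ∘ i.succAbove) := by rw [hAC]
    _ < L.idxOf (C ∘ r.succAbove) := hC i r hr

end LexAntilex

theorem mem_revSet_of_quasiRel {n k : ℕ} {w : Equiv.Perm (Fin n)} {L : List (Fin k → Fin n)}
    (hL : IsAdmissible n k w L) {A C : Fin (k + 1) → Fin n} (hAC : QuasiRel n (k + 1) w A C)
    (hC : C ∈ RevSet n k w L) : A ∈ RevSet n k w L := by
  obtain ⟨X, i, hX, hpair⟩ := quasiRel_iff.mp hAC
  have hA : IsKInv n (k + 1) w A := hX.isKInv_of_quasiPair hpair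
  refine ⟨hA, ?_⟩
  rcases Nat.eq_zero_or_pos k with rfl | hk
  · exact fun a b hab => absurd (Subsingleton.elim (α := Fin 1) a b) hab.ne
  refine (hL.2.2 A hA).resolve_left fun hlex => ?_
  have hshared := hpair.comp_succAbove_self
  have hord {A' C'} (h : QuasiRel n k w A' C') : L.idxOf A' < L.idxOf C' := hL.2.1 _ _ (.single h)
  by_cases hi : i = 0
  · obtain ⟨j, rfl⟩ : ∃ j, Fin.castSucc j = i :=
      Fin.exists_castSucc_eq.mpr (by simp [hi, Fin.ext_iff]; omega)
    have hX' := hX.comp Fin.strictMono_castSucc (q := (j.castSucc, j.succ)) (by simp)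
    exact lt_asymm (hord (quasiRel_iff.mpr ⟨_, j, hX', hpair.comp_succAbove_last⟩))
      (hlex.idxOf_lt_of_antilexAt_of_gt hC.2 hshared (Fin.castSucc_lt_last j))
  · obtain ⟨j, rfl⟩ := Fin.exists_succ_eq.mpr hi
    have hX' := hX.comp Fin.strictMono_succ (q := (j.castSucc, j.succ)) (by simp)
    exact lt_asymm (hord (quasiRel_iff.mpr ⟨_, j, hX', hpair.comp_succAbove_zero⟩))
      (hlex.idxOf_lt_of_antilexAt_of_lt hC.2 hshared (Fin.succ_pos j))

/-- the reversal set of a `k`-admissible order `L` for `w` is a lower order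
ideal of the permanent poset `P_w(n,k+1)`. -/
theorem revSet_isOrderIdeal (n k : ℕ) (w : Equiv.Perm (Fin n))
    (L : List (Fin k → Fin n)) (hL : IsAdmissible n k w L) :
    ∀ A B : Fin (k + 1) → Fin n, IsKInv n (k + 1) w A → B ∈ RevSet n k w L →
      Relation.ReflTransGen (QuasiRel n (k + 1) w) A B → A ∈ RevSet n k w L := by
  rintro A B - hB hAB
  induction hAB using Relation.ReflTransGen.head_induction_on with
  | refl => exact hB
  | head hAC _ ih => exact mem_revSet_of_quasiRel hL hAC ih
end

section
/- For w in S_n, if two k-admissible orders ρ and σ of Inv_k(w) are commutation equivalent (differ by a sequence of swaps of adjacent elements that are incomparable in the permanent poset and do not lie in a common packet of a (k+1)-inversion), then they have equal reversal sets: Rev(ρ) = Rev(σ). -/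
/-- `A` and `B` commute with respect to `w`: they are incomparable in the permanent poset
`P_w(n,k)` and do not both lie in the packet of a common `(k+1)`-inversion. -/
def CommutesWith (n k : ℕ) (w : Equiv.Perm (Fin n)) (A B : Fin k → Fin n) : Prop :=
  ¬ Relation.TransGen (QuasiRel n k w) A B ∧
  ¬ Relation.TransGen (QuasiRel n k w) B A ∧
  ¬ ∃ (Z : Fin (k + 1) → Fin n) (i j : Fin (k + 1)),
      IsKInv n (k + 1) w Z ∧ A = Z ∘ Fin.succAbove i ∧ B = Z ∘ Fin.succAbove j

/-- One commutation move: swap two adjacent elements of the list that commute w.r.t. `w`. -/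
def CommStep (n k : ℕ) (w : Equiv.Perm (Fin n)) (L M : List (Fin k → Fin n)) : Prop :=
  ∃ (p r : List (Fin k → Fin n)) (A B : Fin k → Fin n),
    CommutesWith n k w A B ∧ L = p ++ A :: B :: r ∧ M = p ++ B :: A :: r

/-!
A commutation move swaps two adjacent entries `A`, `B` that lie in no common packet. Swapping
adjacent entries changes the relative position of no pair other than `{A, B}` itself, so for
every `(k+1)`-inversion `X` the order induced on the packet `P(X)` — and with it the question
whether it is antilex — is unchanged.
-/

namespace List

variable {α : Type*} [DecidableEq α]

theorem idxOf_append_cons_cons (p r : List α) (a b e : α) :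
    (p ++ a :: b :: r).idxOf e =
      if e ∈ p then p.idxOf e
      else if e = a then p.length
      else if e = b then p.length + 1
      else p.length + 2 + r.idxOf e := by
  by_cases hp : e ∈ p
  · simp [hp, idxOf_append_of_mem hp]
  rw [idxOf_append_of_notMem hp]
  by_cases ha : e = a
  · subst ha; simp [hp]
  rw [idxOf_cons_ne _ (Ne.symm ha)]
  by_cases hb : e = b
  · subst hb; simp [hp, ha]
  rw [idxOf_cons_ne _ (Ne.symm hb)]
  simp only [hp, ha, hb, if_false]
  omega

theorem idxOf_lt_idxOf_swap_iff (p r : List α) {a b c d : α}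
    (hab : ¬(c = a ∧ d = b)) (hba : ¬(c = b ∧ d = a)) :
    (p ++ b :: a :: r).idxOf c < (p ++ b :: a :: r).idxOf d ↔
      (p ++ a :: b :: r).idxOf c < (p ++ a :: b :: r).idxOf d := by
  rcases eq_or_ne a b with rfl | hne
  · rfl
  have hc : c ∈ p → p.idxOf c < p.length := idxOf_lt_length_iff.2
  have hd : d ∈ p → p.idxOf d < p.length := idxOf_lt_length_iff.2
  simp only [idxOf_append_cons_cons]
  by_cases hcp : c ∈ p <;> by_cases hdp : d ∈ p <;>
    by_cases hca : c = a <;> by_cases hcb : c = b <;>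
    by_cases hda : d = a <;> by_cases hdb : d = b <;>
    simp_all <;> omega

end List

theorem antilexAt_swap_iff {n k : ℕ} (p r : List (Fin k → Fin n)) {A B : Fin k → Fin n}
    {X : Fin (k + 1) → Fin n}
    (hX : ∀ i j, ¬(A = X ∘ Fin.succAbove i ∧ B = X ∘ Fin.succAbove j)) :
    AntilexAt n k (p ++ B :: A :: r) X ↔ AntilexAt n k (p ++ A :: B :: r) X := by
  refine forall₂_congr fun i j => imp_congr_right fun _ => List.idxOf_lt_idxOf_swap_iff p r ?_ ?_
  · exact fun ⟨hi, hj⟩ => hX i j ⟨hi.symm, hj.symm⟩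
  · exact fun ⟨hi, hj⟩ => hX j i ⟨hj.symm, hi.symm⟩

theorem CommStep.revSet_eq {n k : ℕ} {w : Equiv.Perm (Fin n)} {L M : List (Fin k → Fin n)}
    (h : CommStep n k w L M) : RevSet n k w L = RevSet n k w M := by
  obtain ⟨p, r, A, B, ⟨-, -, hpacket⟩, rfl, rfl⟩ := h
  ext X
  refine and_congr_right fun hX => (antilexAt_swap_iff p r fun i j hij => ?_).symm
  exact hpacket ⟨X, i, j, hX, hij⟩

theorem commEquiv_revSet_eq_general (n k : ℕ) (w : Equiv.Perm (Fin n))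
    (L M : List (Fin k → Fin n))
    (h : Relation.ReflTransGen (CommStep n k w) L M) :
    RevSet n k w L = RevSet n k w M := by
  induction h with
  | refl => rfl
  | tail _ hstep ih => exact ih.trans hstep.revSet_eq

/-- commutation equivalent `k`-admissible orders have equal reversal sets. -/
theorem commEquiv_revSet_eq (n k : ℕ) (w : Equiv.Perm (Fin n))
    (L M : List (Fin k → Fin n)) (hL : IsAdmissible n k w L) (hM : IsAdmissible n k w M)
    (h : Relation.ReflTransGen (CommStep n k w) L M) :
    RevSet n k w L = RevSet n k w M :=
  commEquiv_revSet_eq_general n k w L M h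
end
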